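/- Let g be a Lie algebra over a field of characteristic zero and let R₁, R₂ : g → g be commuting O-operators of g associated to the adjoint representation, i.e., R₁∘R₂ = R₂∘R₁ as linear maps and [Rᵢ(x), Rᵢ(y)] = Rᵢ([Rᵢ(x), y] + [x, Rᵢ(y)]) for i = 1,2 and all x,y ∈ g. Then the operations x▷y = [R₁(R₂(x)), y] and x◁y = [R₂(x), R₁(y)] define an L-dendriform algebra structure on g. -/

import Mathlib

/-!
Put `S = R₁ ∘ R₂`. Using the O-operator identities of `R₁` and `R₂` and `R₁ R₂ = R₂ R₁`, one gets
`⁅S x, S y⁆ = S (x ▷ y + x ◁ y - y ◁ x - y ▷ x)`, together with the mixed identity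
`⁅S x, R₂ y⁆ = R₂ (x ▷ y - y ◁ x)`. Each L-dendriform axiom is then the Jacobi identity (in Leibniz
form) for `⁅S x, ⁅S y, z⁆⁆`, resp. `⁅S x, ⁅R₂ y, R₁ z⁆⁆`, rewritten with these two identities and
`⁅S x, R₁ z⁆ = R₁ (⁅S x, z⁆ + ⁅R₂ x, R₁ z⁆)`.
-/

def IsLDendriform {K A : Type*} [Field K] [AddCommGroup A] [Module K A]
    (tr tl : A →ₗ[K] A →ₗ[K] A) : Prop :=
  (∀ x y z : A, tr x (tr y z) =
      tr (tr x y) z + tr (tl x y) z + tr y (tr x z) - tr (tl y x) z - tr (tr y x) z) ∧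
  (∀ x y z : A, tr x (tl y z) =
      tl (tr x y) z + tl y (tr x z) + tl y (tl x z) - tl (tl y x) z)

section CommutingOOperators

variable {K g : Type*} [CommRing K] [LieRing g] [LieAlgebra K g] {R₁ R₂ : g →ₗ[K] g}

theorem lie_comp_apply_apply (hcomm : R₁ ∘ₗ R₂ = R₂ ∘ₗ R₁)
    (h₂ : ∀ x y : g, ⁅R₂ x, R₂ y⁆ = R₂ (⁅R₂ x, y⁆ + ⁅x, R₂ y⁆)) (x y : g) :
    ⁅R₁ (R₂ x), R₂ y⁆ = R₂ ⁅R₁ (R₂ x), y⁆ - R₂ ⁅R₂ y, R₁ x⁆ := by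
  have hc : ∀ x, R₁ (R₂ x) = R₂ (R₁ x) := LinearMap.congr_fun hcomm
  rw [hc, h₂, map_add, ← hc, ← lie_skew (R₂ y), map_neg, sub_neg_eq_add]

theorem lie_comp_apply_comp_apply (hcomm : R₁ ∘ₗ R₂ = R₂ ∘ₗ R₁)
    (h₁ : ∀ x y : g, ⁅R₁ x, R₁ y⁆ = R₁ (⁅R₁ x, y⁆ + ⁅x, R₁ y⁆))
    (h₂ : ∀ x y : g, ⁅R₂ x, R₂ y⁆ = R₂ (⁅R₂ x, y⁆ + ⁅x, R₂ y⁆)) (x y : g) :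
    ⁅R₁ (R₂ x), R₁ (R₂ y)⁆ =
      R₁ (R₂ ⁅R₁ (R₂ x), y⁆) + R₁ (R₂ ⁅R₂ x, R₁ y⁆)
        - R₁ (R₂ ⁅R₂ y, R₁ x⁆) - R₁ (R₂ ⁅R₁ (R₂ y), x⁆) := by
  have hyx : ⁅R₂ x, R₁ (R₂ y)⁆ = R₂ ⁅R₂ x, R₁ y⁆ - R₂ ⁅R₁ (R₂ y), x⁆ := by
    rw [← lie_skew, lie_comp_apply_apply hcomm h₂, neg_sub]
  rw [h₁, lie_comp_apply_apply hcomm h₂, hyx, map_add, map_sub, map_sub]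
  abel

theorem lie_comp_apply_lie_comp_apply (hcomm : R₁ ∘ₗ R₂ = R₂ ∘ₗ R₁)
    (h₁ : ∀ x y : g, ⁅R₁ x, R₁ y⁆ = R₁ (⁅R₁ x, y⁆ + ⁅x, R₁ y⁆))
    (h₂ : ∀ x y : g, ⁅R₂ x, R₂ y⁆ = R₂ (⁅R₂ x, y⁆ + ⁅x, R₂ y⁆)) (x y z : g) :
    ⁅R₁ (R₂ x), ⁅R₁ (R₂ y), z⁆⁆ =
      ⁅R₁ (R₂ ⁅R₁ (R₂ x), y⁆), z⁆ + ⁅R₁ (R₂ ⁅R₂ x, R₁ y⁆), z⁆ + ⁅R₁ (R₂ y), ⁅R₁ (R₂ x), z⁆⁆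
        - ⁅R₁ (R₂ ⁅R₂ y, R₁ x⁆), z⁆ - ⁅R₁ (R₂ ⁅R₁ (R₂ y), x⁆), z⁆ := by
  rw [leibniz_lie, lie_comp_apply_comp_apply hcomm h₁ h₂, sub_lie, sub_lie, add_lie]
  abel

theorem lie_comp_apply_lie_apply_apply (hcomm : R₁ ∘ₗ R₂ = R₂ ∘ₗ R₁)
    (h₁ : ∀ x y : g, ⁅R₁ x, R₁ y⁆ = R₁ (⁅R₁ x, y⁆ + ⁅x, R₁ y⁆))
    (h₂ : ∀ x y : g, ⁅R₂ x, R₂ y⁆ = R₂ (⁅R₂ x, y⁆ + ⁅x, R₂ y⁆)) (x y z : g) :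
    ⁅R₁ (R₂ x), ⁅R₂ y, R₁ z⁆⁆ =
      ⁅R₂ ⁅R₁ (R₂ x), y⁆, R₁ z⁆ + ⁅R₂ y, R₁ ⁅R₁ (R₂ x), z⁆⁆ + ⁅R₂ y, R₁ ⁅R₂ x, R₁ z⁆⁆
        - ⁅R₂ ⁅R₂ y, R₁ x⁆, R₁ z⁆ := by
  rw [leibniz_lie, lie_comp_apply_apply hcomm h₂, h₁ (R₂ x), map_add, sub_lie, lie_add]
  abel

end CommutingOOperators

theorem LDendriform_of_commuting_OOperators_general {K g : Type*} [Field K]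
    [LieRing g] [LieAlgebra K g]
    (R₁ R₂ : g →ₗ[K] g)
    (hcomm : R₁ ∘ₗ R₂ = R₂ ∘ₗ R₁)
    (h₁ : ∀ x y : g, ⁅R₁ x, R₁ y⁆ = R₁ (⁅R₁ x, y⁆ + ⁅x, R₁ y⁆))
    (h₂ : ∀ x y : g, ⁅R₂ x, R₂ y⁆ = R₂ (⁅R₂ x, y⁆ + ⁅x, R₂ y⁆))
    (tr tl : g →ₗ[K] g →ₗ[K] g)
    (htr : ∀ x y : g, tr x y = ⁅R₁ (R₂ x), y⁆)
    (htl : ∀ x y : g, tl x y = ⁅R₂ x, R₁ y⁆) :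
    IsLDendriform tr tl := by
  refine ⟨fun x y z => ?_, fun x y z => ?_⟩ <;> simp only [htr, htl]
  · exact lie_comp_apply_lie_comp_apply hcomm h₁ h₂ x y z
  · exact lie_comp_apply_lie_apply_apply hcomm h₁ h₂ x y z

/-- Let `g` be a Lie algebra over a field of characteristic zero and
`R₁, R₂ : g → g` be commuting O-operators of `g` associated to the adjoint
representation. Then `x▷y = [R₁(R₂(x)), y]` and `x◁y = [R₂(x), R₁(y)]` define an
L-dendriform algebra structure on `g`. Here the two bilinear operations `tr`, `tl`
are given by explicit hypotheses expressing these formulas. -/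
theorem LDendriform_of_commuting_OOperators {K g : Type*} [Field K] [CharZero K]
    [LieRing g] [LieAlgebra K g]
    (R₁ R₂ : g →ₗ[K] g)
    (hcomm : R₁ ∘ₗ R₂ = R₂ ∘ₗ R₁)
    (h₁ : ∀ x y : g, ⁅R₁ x, R₁ y⁆ = R₁ (⁅R₁ x, y⁆ + ⁅x, R₁ y⁆))
    (h₂ : ∀ x y : g, ⁅R₂ x, R₂ y⁆ = R₂ (⁅R₂ x, y⁆ + ⁅x, R₂ y⁆))
    (tr tl : g →ₗ[K] g →ₗ[K] g)
    (htr : ∀ x y : g, tr x y = ⁅R₁ (R₂ x), y⁆)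
    (htl : ∀ x y : g, tl x y = ⁅R₂ x, R₁ y⁆) :
    IsLDendriform tr tl :=
  LDendriform_of_commuting_OOperators_general R₁ R₂ hcomm h₁ h₂ tr tl htr htl
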